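/- The vector π = ∑_{C∈𝒞} π_C · e_C, where π_C = ∑_{σ : C = F_{σ(1)}∘⋯∘F_{σ(N)}} ∏_{p=1}^{N} w_{F_{σ(p)}} / (1 − ∑_{i<p} w_{F_{σ(i)}}) (the sum over all permutations σ of {1,…,N} whose iterated face product equals C), satisfies K π = π; that is, the sampling-without-replacement distribution π is a stationary distribution of the BHR random walk. -/

import Mathlib

/-
Write `π = ∑_σ P(σ) e_{g(σ)}`, where `g(σ) = F_{σ(1)} ∘ ⋯ ∘ F_{σ(N)}` and `P(σ)` is the probability
that sampling the faces without replacement, with weights `w`, draws them in the order `σ`; `g(σ)`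
is a chamber because every `f i` is nonzero on some face. Then
`Kπ = ∑_{σ, j} P(σ) w_{F_j} e_{F_j ∘ g(σ)}`. Writing `σ = τ ∘ c_k` (the order `τ` with its first
entry moved to position `k`) and `F_j = F_{τ(1)}`, the left-regular-band law `x y x = x y` of the
face product gives `F_j ∘ g(σ) = g(τ)`. So `Kπ = π` reduces to `∑_k w_{F_{τ(1)}} P(τ ∘ c_k) = P(τ)`:
forgetting when one item was drawn in sampling without replacement leaves sampling without
replacement of the other items.
-/

open Finset
open scoped Classical

noncomputable section

def faceMul {ι : Type*} (σ τ : ι → SignType) : ι → SignType :=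
  fun i => if σ i = 0 then τ i else σ i

variable {ℓ : ℕ} {ι : Type*} [Fintype ι]

def IsFace (f : ι → ((Fin ℓ → ℝ) →ₗ[ℝ] ℝ)) (σ : ι → SignType) : Prop :=
  {x : Fin ℓ → ℝ | ∀ i, SignType.sign (f i x) = σ i}.Nonempty

def IsChamber (f : ι → ((Fin ℓ → ℝ) →ₗ[ℝ] ℝ)) (σ : ι → SignType) : Prop :=
  IsFace f σ ∧ ∀ i, σ i ≠ 0

variable (f : ι → ((Fin ℓ → ℝ) →ₗ[ℝ] ℝ))

def Faces := {σ : ι → SignType // IsFace f σ}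

def Chambers := {σ : ι → SignType // IsChamber f σ}

instance : Fintype (Faces f) := Subtype.fintype _
instance : Fintype (Chambers f) := Subtype.fintype _

variable (R : Type*) [CommRing R]

/-- The basis vector of the free module on chambers indexed by a sign vector:
`e σ = single σ 1` when `σ` is a chamber (and junk `0` otherwise). -/
def eC (σ : ι → SignType) : Chambers f →₀ R :=
  if h : IsChamber f σ then Finsupp.single ⟨σ, h⟩ 1 else 0

/-- The linear action of a face `σ` on the free module on chambers: `e C ↦ e (σ∘C)`. -/
def faceAct (σ : ι → SignType) : (Chambers f →₀ R) →ₗ[R] (Chambers f →₀ R) :=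
  Finsupp.lsum R fun C => LinearMap.toSpanSingleton R _ (eC f R (faceMul σ C.1))

/-- The BHR transition operator `K(e C) = ∑_F w_F • e (F∘C)`. -/
def transOp (w : Faces f → R) : (Chambers f →₀ R) →ₗ[R] (Chambers f →₀ R) :=
  Finsupp.lsum R fun C =>
    LinearMap.toSpanSingleton R _ (∑ F : Faces f, w F • eC f R (faceMul F.1 C.1))

/-- The field of rational functions in the weight indeterminates `w_F`. -/
abbrev RatW := FractionRing (MvPolynomial (Faces f) ℝ)

/-- The weights as indeterminates in the field of rational functions. -/
def wt : Faces f → RatW f :=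
  fun F => algebraMap (MvPolynomial (Faces f) ℝ) (RatW f) (MvPolynomial.X F)

/-- The condition that the iterated face product `F_{σ(1)} ∘ ⋯ ∘ F_{σ(N)}` equals `C`. -/
def prodCond {N : ℕ} (en : Fin N ≃ Faces f) (σ : Equiv.Perm (Fin N)) (C : ι → SignType) : Prop :=
  (List.ofFn fun p => (en (σ p)).1).foldr faceMul 0 = C


/-- The coordinate `π_C = ∑_σ ∏_{p=1}^N w_{F_{σ(p)}} / (1 − ∑_{i<p} w_{F_{σ(i)}})` of the
sampling-without-replacement distribution, the sum being over all permutations `σ` whose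
iterated face product equals `C`. -/
def piCoord {N : ℕ} (en : Fin N ≃ Faces f) (w : Faces f → ℝ) (C : ι → SignType) : ℝ :=
  ∑ σ ∈ univ.filter (fun σ : Equiv.Perm (Fin N) => prodCond f en σ C),
    ∏ p : Fin N, w (en (σ p)) / (1 - ∑ i ∈ Finset.Iio p, w (en (σ i)))

namespace List

variable {K : Type*} [Field K]

def samplingProb : List K → K
  | [] => 1
  | a :: L => a / (a + L.sum) * samplingProb L

theorem samplingProb_ofFn : ∀ {n : ℕ} (a : Fin n → K),
    (ofFn a).samplingProb = ∏ p, a p / ∑ i ∈ Ici p, a i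
  | 0, _ => rfl
  | n + 1, a => by
    rw [ofFn_succ, samplingProb, samplingProb_ofFn, Fin.prod_univ_succ, sum_ofFn]
    simp [Fin.sum_Ici_succ, Fin.sum_univ_succ]

theorem samplingProb_ofFn_of_sum_eq_one {n : ℕ} (a : Fin n → K) (h : ∑ i, a i = 1) :
    (ofFn a).samplingProb = ∏ p, a p / (1 - ∑ i ∈ Iio p, a i) := by
  rw [samplingProb_ofFn, ← h]
  refine prod_congr rfl fun p _ => ?_
  congr 1
  rw [eq_sub_iff_add_eq', ← Finset.sum_union
    (Finset.disjoint_left.2 fun x h1 h2 => (mem_Ici.1 h2).not_gt (mem_Iio.1 h1))]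
  exact sum_congr (by ext; simp [lt_or_ge]) fun _ _ => rfl

theorem sum_samplingProb_insertIdx [LinearOrder K] [IsStrictOrderedRing K] {t : K} (ht : 0 < t) :
    ∀ {L : List K}, (∀ a ∈ L, 0 < a) →
      ∑ k ∈ Finset.range (L.length + 1), (L.insertIdx k t).samplingProb = L.samplingProb
  | [], _ => by simp [samplingProb, ht.ne']
  | b :: L, hL => by
    have hb : 0 < b := hL b mem_cons_self
    have hLpos : 0 ≤ L.sum := sum_nonneg fun a ha => (hL a (mem_cons_of_mem b ha)).le
    have hsum : ∀ k ∈ Finset.range (L.length + 1), (L.insertIdx k t).sum = t + L.sum :=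
      fun k hk => (perm_insertIdx t L (by simpa [Nat.lt_succ_iff] using hk)).sum_eq.trans sum_cons
    rw [length_cons, Finset.sum_range_succ', insertIdx_zero]
    simp only [insertIdx_succ_cons, samplingProb, sum_cons]
    rw [Finset.sum_congr rfl fun k hk => by rw [hsum k hk], ← Finset.mul_sum,
      sum_samplingProb_insertIdx ht fun a ha => hL a (mem_cons_of_mem b ha)]
    field_simp
    ring

theorem ofFn_insertNth {α : Type*} : ∀ {n : ℕ} (p : Fin (n + 1)) (a : α) (x : Fin n → α),
    ofFn (p.insertNth a x) = (ofFn x).insertIdx p a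
  | n, p, a, x => by
    cases p using Fin.cases with
    | zero => rw [Fin.insertNth_zero', ofFn_cons, Fin.val_zero, insertIdx_zero]
    | succ q =>
      obtain ⟨m, rfl⟩ : ∃ m, n = m + 1 := Nat.exists_eq_succ_of_ne_zero q.pos.ne'
      rw [← Fin.cons_self_tail x, Fin.insertNth_succ_cons, ofFn_cons, ofFn_cons, ofFn_insertNth,
        Fin.val_succ, insertIdx_succ_cons]

theorem ofFn_comp_cycleRange {α : Type*} {n : ℕ} (a : Fin (n + 1) → α) (k : Fin (n + 1)) :
    ofFn (a ∘ k.cycleRange) = (ofFn (fun i => a i.succ)).insertIdx k (a 0) := by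
  rw [← Fin.cons_self_tail a, Fin.cons_comp_cycleRange, ofFn_insertNth]
  rfl

theorem sum_mul_samplingProb_comp_cycleRange [LinearOrder K] [IsStrictOrderedRing K] {n : ℕ}
    (a : Fin (n + 1) → K) (ha : ∀ p, 0 < a p) (h : ∑ p, a p = 1) :
    ∑ k : Fin (n + 1), a 0 * (ofFn (a ∘ k.cycleRange)).samplingProb = (ofFn a).samplingProb := by
  have hsum : a 0 + (ofFn (fun i => a i.succ)).sum = 1 := by
    rw [sum_ofFn, ← h, Fin.sum_univ_succ]
  have hins := sum_samplingProb_insertIdx (ha 0) (L := ofFn (fun i => a i.succ))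
    (by simpa [mem_ofFn] using fun p : Fin n => ha p.succ)
  rw [length_ofFn] at hins
  simp only [ofFn_comp_cycleRange, ← Finset.mul_sum]
  rw [Fin.sum_univ_eq_sum_range
      (fun k => ((ofFn (fun i => a i.succ)).insertIdx k (a 0)).samplingProb), hins, ofFn_succ,
    samplingProb, hsum, div_one]

end List

section FaceProduct

variable {κ : Type*}

theorem faceMul_idem (a b : κ → SignType) : faceMul a (faceMul a b) = faceMul a b := by
  funext i; simp only [faceMul]; by_cases h : a i = 0 <;> simp [h]

theorem faceMul_left_regular (a b c : κ → SignType) :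
    faceMul a (faceMul b (faceMul a c)) = faceMul a (faceMul b c) := by
  funext i; simp only [faceMul]; by_cases h : a i = 0 <;> by_cases h' : b i = 0 <;> simp [h, h']

theorem faceMul_foldr_insertIdx (a : κ → SignType) :
    ∀ (L : List (κ → SignType)) (k : ℕ),
      faceMul a ((L.insertIdx k a).foldr faceMul 0) = faceMul a (L.foldr faceMul 0)
  | L, 0 => by rw [List.insertIdx_zero, List.foldr_cons, faceMul_idem]
  | [], _ + 1 => rfl
  | b :: L, k + 1 => by
    rw [List.insertIdx_succ_cons, List.foldr_cons, List.foldr_cons, ← faceMul_left_regular,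
      faceMul_foldr_insertIdx a L k, faceMul_left_regular]

theorem foldr_faceMul_apply_eq_zero_iff (L : List (κ → SignType)) (i : κ) :
    L.foldr faceMul 0 i = 0 ↔ ∀ a ∈ L, a i = 0 := by
  induction L with
  | nil => simp
  | cons a L ih => by_cases h : a i = 0 <;> simp [faceMul, h, ih]

end FaceProduct

theorem eventually_sign_add_mul (a b : ℝ) :
    ∀ᶠ ε in nhdsWithin 0 (Set.Ioi 0),
      SignType.sign (a + ε * b) =
        if SignType.sign a = 0 then SignType.sign b else SignType.sign a := by
  by_cases ha : a = 0
  · filter_upwards [self_mem_nhdsWithin] with ε (hε : 0 < ε)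
    simp [ha, sign_mul, sign_pos hε]
  · have hcont : Continuous fun ε : ℝ => a + ε * b := by fun_prop
    have hlim : Filter.Tendsto (fun ε : ℝ => a + ε * b) (nhdsWithin 0 (Set.Ioi 0)) (nhds a) :=
      (hcont.tendsto' 0 a (by simp)).mono_left nhdsWithin_le_nhds
    have := (continuousAt_sign_of_ne_zero ha).tendsto.comp hlim
    rw [nhds_discrete, Filter.tendsto_pure] at this
    simpa [ha] using this

section Arrangement

variable {ℓ : ℕ} {ι : Type*} (f : ι → ((Fin ℓ → ℝ) →ₗ[ℝ] ℝ))

theorem isFace_zero : IsFace f 0 := ⟨0, fun i => by simp⟩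

theorem isFace_faceMul [Finite ι] {σ τ : ι → SignType} (hσ : IsFace f σ) (hτ : IsFace f τ) :
    IsFace f (faceMul σ τ) := by
  obtain ⟨x, hx⟩ := hσ
  obtain ⟨y, hy⟩ := hτ
  -- for small `ε > 0`, the point `x + ε • y` realizes `σ ∘ τ`
  have hε : ∀ᶠ ε in nhdsWithin (0 : ℝ) (Set.Ioi 0),
      ∀ i, SignType.sign (f i (x + ε • y)) = faceMul σ τ i :=
    Filter.eventually_all.2 fun i => by
      simpa [faceMul, hx i, hy i] using eventually_sign_add_mul (f i x) (f i y)
  obtain ⟨ε, hε⟩ := hε.exists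
  exact ⟨x + ε • y, hε⟩

theorem isFace_foldr_faceMul [Finite ι] (L : List (ι → SignType)) (hL : ∀ σ ∈ L, IsFace f σ) :
    IsFace f (L.foldr faceMul 0) := by
  induction L with
  | nil => exact isFace_zero f
  | cons a L ih =>
    exact isFace_faceMul f (hL a List.mem_cons_self)
      (ih fun σ hσ => hL σ (List.mem_cons_of_mem a hσ))

theorem isChamber_foldr_faceMul [Finite ι] (hf : ∀ i, f i ≠ 0) (L : List (ι → SignType))
    (hL : ∀ σ ∈ L, IsFace f σ) (hall : ∀ F : Faces f, F.1 ∈ L) :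
    IsChamber f (L.foldr faceMul 0) := by
  refine ⟨isFace_foldr_faceMul f L hL, fun i hi => ?_⟩
  obtain ⟨x, hx⟩ : ∃ x, f i x ≠ 0 := by
    by_contra! h
    exact hf i (LinearMap.ext h)
  have hsign := (foldr_faceMul_apply_eq_zero_iff L i).1 hi _ (hall ⟨_, x, fun j => rfl⟩)
  exact hx (sign_eq_zero_iff.1 hsign)

theorem eC_of_isChamber {R : Type*} [CommRing R] {σ : ι → SignType} (h : IsChamber f σ) :
    eC f R σ = Finsupp.single ⟨σ, h⟩ 1 :=
  dif_pos h

section Ordering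

variable {N : ℕ} (en : Fin N ≃ Faces f)

def facesProd (σ : Equiv.Perm (Fin N)) : ι → SignType :=
  (List.ofFn fun p => (en (σ p)).1).foldr faceMul 0

theorem isChamber_facesProd [Finite ι] (hf : ∀ i, f i ≠ 0) (σ : Equiv.Perm (Fin N)) :
    IsChamber f (facesProd f en σ) :=
  isChamber_foldr_faceMul f hf _ (by simpa [List.mem_ofFn] using fun p => (en (σ p)).2)
    fun F => List.mem_ofFn.2 ⟨σ⁻¹ (en.symm F), by simp⟩

def facesProdChamber [Finite ι] (hf : ∀ i, f i ≠ 0) (σ : Equiv.Perm (Fin N)) : Chambers f :=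
  ⟨facesProd f en σ, isChamber_facesProd f en hf σ⟩

end Ordering

theorem faceMul_facesProd_mul_cycleRange {n : ℕ} (en : Fin (n + 1) ≃ Faces f)
    (τ : Equiv.Perm (Fin (n + 1))) (k : Fin (n + 1)) :
    faceMul (en (τ 0)).1 (facesProd f en (τ * k.cycleRange)) = facesProd f en τ := by
  have h := List.ofFn_comp_cycleRange (fun p => (en (τ p)).1) k
  simp only [Function.comp_def] at h
  simp only [facesProd, Equiv.Perm.coe_mul, Function.comp_apply, h, faceMul_foldr_insertIdx,
    List.ofFn_succ, List.foldr_cons]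

variable [Fintype ι]

theorem transOp_single {R : Type*} [CommRing R] (w : Faces f → R) (C : Chambers f) (c : R) :
    transOp f R w (Finsupp.single C c) =
      ∑ F : Faces f, (c * w F) • eC f R (faceMul F.1 C.1) := by
  simp only [transOp, Finsupp.lsum_single, LinearMap.toSpanSingleton_apply, smul_sum, smul_smul]

def samplingDist {K : Type*} [Field K] {N : ℕ} (en : Fin N ≃ Faces f) (hf : ∀ i, f i ≠ 0)
    (w : Faces f → K) : Chambers f →₀ K :=
  ∑ σ, Finsupp.single (facesProdChamber f en hf σ) (List.ofFn fun p => w (en (σ p))).samplingProb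

theorem sum_single_piCoord_eq_samplingDist {N : ℕ} (en : Fin N ≃ Faces f) (hf : ∀ i, f i ≠ 0)
    (w : Faces f → ℝ) (hw1 : ∑ F, w F = 1) :
    ∑ C : Chambers f, Finsupp.single C (piCoord f en w C.1) = samplingDist f en hf w := by
  rw [samplingDist, ← sum_fiberwise univ (facesProdChamber f en hf)]
  refine sum_congr rfl fun C _ => ?_
  rw [piCoord, Finsupp.single_finsetSum]
  refine sum_congr (filter_congr fun σ _ => ⟨fun h => Subtype.ext h, congrArg Subtype.val⟩)
    fun σ hσ => ?_
  rw [(mem_filter.1 hσ).2, List.samplingProb_ofFn_of_sum_eq_one]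
  exact (Equiv.sum_comp σ _).trans ((Equiv.sum_comp en w).trans hw1)

theorem transOp_samplingDist {K : Type*} [Field K] [LinearOrder K] [IsStrictOrderedRing K]
    {n : ℕ} (en : Fin (n + 1) ≃ Faces f) (hf : ∀ i, f i ≠ 0) {w : Faces f → K}
    (hw : ∀ F, 0 < w F) (hw1 : ∑ F, w F = 1) :
    transOp f K w (samplingDist f en hf w) = samplingDist f en hf w := by
  set g := facesProdChamber f en hf
  set P : Equiv.Perm (Fin (n + 1)) → K := fun σ => (List.ofFn fun p => w (en (σ p))).samplingProb
  calc transOp f K w (∑ σ, Finsupp.single (g σ) (P σ))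
      = ∑ σ, ∑ j, (P σ * w (en j)) • eC f K (faceMul (en j).1 (facesProd f en σ)) := by
        simp only [map_sum, transOp_single]
        exact sum_congr rfl fun σ _ => (Equiv.sum_comp en _).symm
    _ = ∑ σ, ∑ k, (P σ * w (en (σ k))) • eC f K (faceMul (en (σ k)).1 (facesProd f en σ)) :=
        sum_congr rfl fun σ _ => (Equiv.sum_comp σ _).symm
    _ = ∑ k : Fin (n + 1), ∑ τ, (P (τ * k.cycleRange) * w (en (τ 0))) •
          eC f K (faceMul (en (τ 0)).1 (facesProd f en (τ * k.cycleRange))) := by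
        -- substitute `σ = τ * c_k`, so that `σ k = τ 0`
        rw [sum_comm]
        refine sum_congr rfl fun k _ => ?_
        rw [← Equiv.sum_comp (Equiv.mulRight k.cycleRange)]
        simp [Fin.cycleRange_self]
    _ = ∑ τ, ∑ k : Fin (n + 1),
          (w (en (τ 0)) * P (τ * k.cycleRange)) • Finsupp.single (g τ) 1 := by
        rw [sum_comm]
        refine sum_congr rfl fun τ _ => sum_congr rfl fun k _ => ?_
        rw [faceMul_facesProd_mul_cycleRange, eC_of_isChamber f (isChamber_facesProd f en hf τ),
          mul_comm]
        rfl
    _ = ∑ τ, Finsupp.single (g τ) (P τ) := by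
        refine sum_congr rfl fun τ _ => ?_
        rw [← sum_smul, Finsupp.smul_single_one]
        congr 1
        exact List.sum_mul_samplingProb_comp_cycleRange (fun p => w (en (τ p))) (fun p => hw _)
          ((Equiv.sum_comp τ _).trans ((Equiv.sum_comp en w).trans hw1))

end Arrangement

theorem transOp_pi_eq_pi_general {ℓ : ℕ} {ι : Type*} [Fintype ι]
    (f : ι → ((Fin ℓ → ℝ) →ₗ[ℝ] ℝ)) (hf : ∀ i, f i ≠ 0)
    (w : Faces f → ℝ) (hw : ∀ F, 0 < w F) (hw1 : ∑ F : Faces f, w F = 1)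
    (N : ℕ) (en : Fin N ≃ Faces f) :
    transOp f ℝ w (∑ C : Chambers f, Finsupp.single C (piCoord f en w C.1)) =
      ∑ C : Chambers f, Finsupp.single C (piCoord f en w C.1) := by
  cases N with
  | zero => exact (en.symm ⟨0, isFace_zero f⟩).elim0
  | succ n =>
    rw [sum_single_piCoord_eq_samplingDist f en hf w hw1, transOp_samplingDist f en hf hw hw1]

/-- The sampling-without-replacement distribution `π` is a stationary distribution of the
BHR random walk: `K π = π`. -/
theorem transOp_pi_eq_pi {ℓ : ℕ} (hℓ : 1 ≤ ℓ) {ι : Type*} [Fintype ι] [Nonempty ι]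
    (f : ι → ((Fin ℓ → ℝ) →ₗ[ℝ] ℝ)) (hf : ∀ i, f i ≠ 0)
    (hess : (⨅ i, LinearMap.ker (f i)) = ⊥)
    (w : Faces f → ℝ) (hw : ∀ F, 0 < w F) (hw1 : ∑ F : Faces f, w F = 1)
    (N : ℕ) (en : Fin N ≃ Faces f) :
    transOp f ℝ w (∑ C : Chambers f, Finsupp.single C (piCoord f en w C.1)) =
      ∑ C : Chambers f, Finsupp.single C (piCoord f en w C.1) :=
  transOp_pi_eq_pi_general f hf w hw hw1 N en
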